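/- Assume in addition that σ_n = T almost surely for every n ∈ ℕ ∪ {∞}. Then sup_{t ∈ [0,T]} ‖X_n(t) − X_∞(t)‖ → 0 in probability as n → ∞ (i.e., X_n → X_∞ in L⁰(Ω; C([0,T]; E))). -/

import Mathlib

/-!
Since `σ_∞ = T` almost surely, the paths of `X_∞` are almost surely continuous, hence bounded, on
`[0, T]`; so `‖X_∞‖ ≤ R` on `[0, T]` outside an event whose probability tends to `0` as `R → ∞`
(it is measurable because, by continuity, it suffices to look at rational times). Outside that
event, as soon as `sup ‖X_n^{(R+1)} - X_∞^{(R+1)}‖ < 1`, neither process leaves the ball of radius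
`R + 1` before `T`: at its exit time `X_n` would have norm `≥ R + 1` while staying within `1` of
`X_∞`. Both localized processes then agree with the original ones on all of `[0, T]`, so the two
suprema coincide, and convergence in probability transfers from the localized processes.
-/

open MeasureTheory Filter Set Topology

section ExitTime

variable {E : Type*} [SeminormedAddCommGroup E]

noncomputable def exitTime (f : ℝ → E) (s r T : ℝ) : ℝ :=
  sInf ({t | t ∈ Ioo 0 s ∧ r < ‖f t‖} ∪ {T})

variable {f : ℝ → E} {s r T : ℝ}

lemma bddBelow_exitTime_set (hT : 0 ≤ T) :
    BddBelow ({t | t ∈ Ioo 0 s ∧ r < ‖f t‖} ∪ {T}) := by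
  refine ⟨0, ?_⟩
  rintro t (⟨ht, -⟩ | rfl)
  exacts [ht.1.le, hT]

lemma exitTime_le (hT : 0 ≤ T) : exitTime f s r T ≤ T :=
  csInf_le (bddBelow_exitTime_set hT) (Or.inr rfl)

lemma exitTime_nonneg (hT : 0 ≤ T) : 0 ≤ exitTime f s r T := by
  refine le_csInf ⟨T, Or.inr rfl⟩ ?_
  rintro t (⟨ht, -⟩ | rfl)
  exacts [ht.1.le, hT]

lemma exitTime_eq_of_norm_le (h : ∀ t ∈ Ioo 0 s, ‖f t‖ ≤ r) : exitTime f s r T = T := by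
  have : {t | t ∈ Ioo 0 s ∧ r < ‖f t‖} = ∅ :=
    eq_empty_of_forall_notMem fun t ⟨ht, hr⟩ => (h t ht).not_gt hr
  simp only [exitTime, this, empty_union, csInf_singleton]

lemma le_norm_exitTime (hT : 0 ≤ T) (hs : s ≤ T) (hf : ContinuousOn f (Icc 0 T))
    (hlt : exitTime f s r T < T) : r ≤ ‖f (exitTime f s r T)‖ := by
  set C := Icc 0 T ∩ f ⁻¹' {y | r ≤ ‖y‖} ∪ {T}
  have hC : IsClosed C :=
    (hf.preimage_isClosed_of_isClosed isClosed_Icc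
      (isClosed_le continuous_const continuous_norm)).union isClosed_singleton
  have hsub : {t | t ∈ Ioo 0 s ∧ r < ‖f t‖} ∪ {T} ⊆ C := by
    rintro t (⟨ht, hr⟩ | rfl)
    exacts [Or.inl ⟨⟨ht.1.le, ht.2.le.trans hs⟩, hr.le⟩, Or.inr rfl]
  have hmem : exitTime f s r T ∈ C :=
    closure_minimal hsub hC (csInf_mem_closure ⟨T, Or.inr rfl⟩ (bddBelow_exitTime_set hT))
  rcases hmem with ⟨-, h⟩ | h
  exacts [h, absurd h hlt.ne]

lemma exitTime_eq_of_norm_sub_lt_one {x y : ℝ → E} {R : ℝ} (hT : 0 ≤ T) (hs : s ≤ T)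
    (hx : ContinuousOn x (Icc 0 T)) (hy : ∀ t ∈ Icc 0 T, ‖y t‖ ≤ R)
    (hxy : ∀ t ∈ Icc 0 (exitTime x s (R + 1) T), ‖x t - y t‖ < 1) :
    exitTime x s (R + 1) T = T := by
  set p := exitTime x s (R + 1) T
  by_contra hne
  have hpT : p < T := (exitTime_le hT).lt_of_ne hne
  have hp : p ∈ Icc 0 p := ⟨exitTime_nonneg hT, le_rfl⟩
  have h₁ : R + 1 ≤ ‖x p‖ := le_norm_exitTime hT hs hx hpT
  have h₂ : ‖y p‖ ≤ R := hy p ⟨hp.1, hpT.le⟩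
  have h₃ : ‖x p - y p‖ < 1 := hxy p hp
  have h₄ := norm_sub_norm_le (x p) (y p)
  linarith

end ExitTime

lemma norm_le_iSup_Icc {E : Type*} [SeminormedAddCommGroup E] {f : ℝ → E} {a b t : ℝ}
    (hf : ContinuousOn f (Icc a b)) (ht : t ∈ Icc a b) :
    ‖f t‖ ≤ ⨆ u : Icc a b, ‖f u‖ := by
  obtain ⟨C, hC⟩ := isCompact_Icc.exists_bound_of_continuousOn hf
  exact le_ciSup (f := fun u : Icc a b => ‖f u‖) ⟨C, by rintro _ ⟨u, rfl⟩; exact hC u u.2⟩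
    ⟨t, ht⟩

lemma exists_rat_mem_Ioo_of_continuousOn {α : Type*} [TopologicalSpace α] {g : ℝ → α}
    {a b t : ℝ} (hab : a < b) (hg : ContinuousOn g (Icc a b)) {U : Set α} (hU : IsOpen U)
    (ht : t ∈ Icc a b) (htU : g t ∈ U) : ∃ q : ℚ, (q : ℝ) ∈ Ioo a b ∧ g q ∈ U := by
  obtain ⟨V, hV, hVU⟩ := continuousOn_iff'.mp hg U hU
  have htV : t ∈ V ∩ Icc a b := hVU ▸ ⟨htU, ht⟩
  have hne : (V ∩ Ioo a b).Nonempty := by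
    rw [← closure_Ioo hab.ne] at ht
    exact mem_closure_iff.mp ht V hV htV.1
  obtain ⟨q, hqV, hq⟩ := Rat.denseRange_cast.exists_mem_open (hV.inter isOpen_Ioo) hne
  have hqU : (q : ℝ) ∈ g ⁻¹' U ∩ Icc a b := hVU ▸ ⟨hqV, Ioo_subset_Icc_self hq⟩
  exact ⟨q, hq, hqU.1⟩

lemma norm_le_of_forall_rat {E : Type*} [SeminormedAddCommGroup E] {f : ℝ → E} {T R : ℝ}
    (hT : 0 < T) (hf : ContinuousOn f (Icc 0 T)) (h : ∀ q : ℚ, (q : ℝ) ∈ Ioo 0 T → ‖f q‖ ≤ R) :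
    ∀ t ∈ Icc 0 T, ‖f t‖ ≤ R := by
  intro t ht
  by_contra! hR
  obtain ⟨q, hq, hqR⟩ := exists_rat_mem_Ioo_of_continuousOn hT hf
    (isOpen_lt continuous_const continuous_norm) ht hR
  exact (h q hq).not_gt hqR

lemma iSup_norm_sub_eq_of_eqOn_exitTime {E : Type*} [SeminormedAddCommGroup E]
    {x y z w : ℝ → E} {s s' T R : ℝ} (hT : 0 ≤ T) (hs : s ≤ T) (hs' : s' ≤ T)
    (hx : ContinuousOn x (Icc 0 T)) (hz : Continuous z) (hw : Continuous w)
    (hy : ∀ t ∈ Icc 0 T, ‖y t‖ ≤ R)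
    (hzx : ∀ t ∈ Icc 0 (exitTime x s (R + 1) T), z t = x t)
    (hwy : ∀ t ∈ Icc 0 (exitTime y s' (R + 1) T), w t = y t)
    (hzw : ⨆ t : Icc 0 T, ‖z t - w t‖ < 1) :
    ⨆ t : Icc 0 T, ‖x t - y t‖ = ⨆ t : Icc 0 T, ‖z t - w t‖ := by
  have hyT : exitTime y s' (R + 1) T = T := exitTime_eq_of_norm_le fun t ht =>
    (hy t ⟨ht.1.le, ht.2.le.trans hs'⟩).trans (le_add_of_nonneg_right zero_le_one)
  have hzw' : ∀ t ∈ Icc 0 T, ‖z t - w t‖ < 1 := fun t ht =>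
    (norm_le_iSup_Icc (hz.sub hw).continuousOn ht).trans_lt hzw
  have hxT : exitTime x s (R + 1) T = T := by
    refine exitTime_eq_of_norm_sub_lt_one hT hs hx hy fun t ht => ?_
    have htT : t ∈ Icc 0 T := ⟨ht.1, ht.2.trans (exitTime_le hT)⟩
    rw [← hzx t ht, ← hwy t (by rwa [hyT])]
    exact hzw' t htT
  refine iSup_congr fun t => ?_
  rw [hzx t (by rw [hxT]; exact t.2), hwy t (by rw [hyT]; exact t.2)]

section Probability

variable {Ω : Type*} [MeasurableSpace Ω] {μ : Measure Ω}

lemma tendsto_measure_exists_rat_lt_norm [IsFiniteMeasure μ] {E : Type*}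
    [NormedAddCommGroup E] [MeasurableSpace E] [OpensMeasurableSpace E] {Z : ℝ → Ω → E}
    {T : ℝ} (hZ : ∀ t, Measurable (Z t))
    (hcont : ∀ᵐ ω ∂μ, ContinuousOn (fun t => Z t ω) (Icc 0 T)) :
    Tendsto (fun k : ℕ => μ {ω | ∃ q : ℚ, (q : ℝ) ∈ Ioo 0 T ∧ (k : ℝ) < ‖Z q ω‖}) atTop (𝓝 0) := by
  set A := fun k : ℕ => {ω | ∃ q : ℚ, (q : ℝ) ∈ Ioo 0 T ∧ (k : ℝ) < ‖Z q ω‖}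
  have hmeas : ∀ k, MeasurableSet (A k) := fun k => by
    simp only [A, ofPred_exists, ofPred_and]
    exact .iUnion fun q =>
      (MeasurableSet.const _).inter (measurableSet_lt measurable_const (hZ q).norm)
  have hanti : Antitone A := fun j k hjk ω ⟨q, hq, hlt⟩ =>
    ⟨q, hq, lt_of_le_of_lt (by exact_mod_cast hjk) hlt⟩
  have hnull : μ (⋂ k, A k) = 0 := by
    refine measure_mono_null ?_ (ae_iff.mp hcont)
    intro ω hω hc
    obtain ⟨C, hC⟩ := isCompact_Icc.exists_bound_of_continuousOn hc
    obtain ⟨k, hk⟩ := exists_nat_gt C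
    obtain ⟨q, hq, hlt⟩ := mem_iInter.mp hω k
    exact (hk.trans hlt).not_ge (hC q (Ioo_subset_Icc_self hq))
  change Tendsto (μ ∘ A) atTop (𝓝 0)
  simpa only [hnull] using tendsto_measure_iInter_atTop
    (fun k => (hmeas k).nullMeasurableSet) hanti ⟨0, measure_ne_top μ _⟩

theorem tendstoInMeasure_of_eq_of_norm_lt_one {E : Type*} [SeminormedAddCommGroup E]
    {f : ℕ → Ω → E} {g : ℕ → ℕ → Ω → E} {A : ℕ → Set Ω}
    (hA : Tendsto (fun k => μ (A k)) atTop (𝓝 0)) (hg : ∀ k, TendstoInMeasure μ (g k) atTop 0)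
    (hfg : ∀ k n, ∀ᵐ ω ∂μ, ω ∉ A k → ‖g k n ω‖ < 1 → f n ω = g k n ω) :
    TendstoInMeasure μ f atTop 0 := by
  simp only [tendstoInMeasure_iff_norm, Pi.zero_apply, sub_zero] at hg ⊢
  intro ε hε
  have hbound : ∀ k n,
      μ {ω | ε ≤ ‖f n ω‖} ≤ μ {ω | min ε 1 ≤ ‖g k n ω‖} + μ (A k) := by
    intro k n
    refine (measure_mono_ae ?_).trans (measure_union_le _ _)
    filter_upwards [hfg k n] with ω hω (hεω : ε ≤ ‖f n ω‖)
    show min ε 1 ≤ ‖g k n ω‖ ∨ ω ∈ A k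
    by_contra! hgood
    have hf : f n ω = g k n ω := hω hgood.2 (hgood.1.trans_le (min_le_right _ _))
    exact (hf ▸ hεω : ε ≤ ‖g k n ω‖).not_gt (hgood.1.trans_le (min_le_left _ _))
  rw [ENNReal.tendsto_atTop_zero]
  intro δ hδ
  have hδ2 : 0 < δ / 2 := ENNReal.half_pos hδ.ne'
  obtain ⟨k, hk⟩ := ENNReal.tendsto_atTop_zero.mp hA _ hδ2
  obtain ⟨N, hN⟩ := ENNReal.tendsto_atTop_zero.mp (hg k _ (lt_min hε one_pos)) _ hδ2
  exact ⟨N, fun n hn => (hbound k n).trans <|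
    (add_le_add (hN n hn) (hk k le_rfl)).trans_eq (ENNReal.add_halves δ)⟩

end Probability

theorem stmt_7_general
    {Ω : Type*} [MeasurableSpace Ω] (P : Measure Ω) [IsProbabilityMeasure P]
    {E : Type*} [NormedAddCommGroup E]
    [MeasurableSpace E] [BorelSpace E]
    (T : ℝ) (hT : 0 < T)
    -- the explosion times σ_n (n ∈ ℕ) and σ_∞
    (σ : ℕ → Ω → ℝ) (σi : Ω → ℝ)
    -- the processes X_n (n ∈ ℕ) and X_∞, jointly measurable
    (X : ℕ → ℝ → Ω → E) (Xi : ℝ → Ω → E)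
    (hXimeas : Measurable fun p : ℝ × Ω => Xi p.1 p.2)
    -- path continuity on [0, σ_n(ω)), and on [0,T] if σ_n(ω) = T
    (hXcontT : ∀ n ω, σ n ω = T → ContinuousOn (fun t => X n t ω) (Set.Icc 0 T))
    (hXicontT : ∀ ω, σi ω = T → ContinuousOn (fun t => Xi t ω) (Set.Icc 0 T))
    -- the stopping times ρ_n^{(r)} = inf { t ∈ (0, σ_n) : ‖X_n(t)‖ > r }, inf ∅ := T
    (ρ : ℕ → ℝ → Ω → ℝ) (ρi : ℝ → Ω → ℝ)
    (hρ : ∀ n r ω, ρ n r ω = sInf ({t : ℝ | t ∈ Set.Ioo 0 (σ n ω) ∧ r < ‖X n t ω‖} ∪ {T}))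
    (hρi : ∀ r ω, ρi r ω = sInf ({t : ℝ | t ∈ Set.Ioo 0 (σi ω) ∧ r < ‖Xi t ω‖} ∪ {T}))
    -- the globally defined processes X_n^{(r)} (denoted Y n r) and X_∞^{(r)} (denoted Yi r)
    (Y : ℕ → ℝ → ℝ → Ω → E) (Yi : ℝ → ℝ → Ω → E)
    (hYcont : ∀ n r ω, Continuous fun t => Y n r t ω)
    (hYicont : ∀ r ω, Continuous fun t => Yi r t ω)
    -- assumption (a)
    (ha : ∀ n r, 0 < r → ∀ᵐ ω ∂P, ∀ t ∈ Set.Icc 0 (ρ n r ω), Y n r t ω = X n t ω)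
    (hai : ∀ r, 0 < r → ∀ᵐ ω ∂P, ∀ t ∈ Set.Icc 0 (ρi r ω), Yi r t ω = Xi t ω)
    -- assumption (b): X_n^{(r)} → X_∞^{(r)} in L⁰(Ω; C([0,T]; E))
    (hb : ∀ r, 0 < r → TendstoInMeasure P
      (fun n ω => ⨆ t : Set.Icc (0:ℝ) T, ‖Y n r (t : ℝ) ω - Yi r (t : ℝ) ω‖)
      atTop (fun _ => (0 : ℝ)))
    -- additionally: σ_n = T almost surely for all n ∈ ℕ ∪ {{∞}}
    (hσT : ∀ n, ∀ᵐ ω ∂P, σ n ω = T) (hσiT : ∀ᵐ ω ∂P, σi ω = T) :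
    TendstoInMeasure P
      (fun n ω => ⨆ t : Set.Icc (0:ℝ) T, ‖X n (t : ℝ) ω - Xi (t : ℝ) ω‖)
      atTop (fun _ => (0 : ℝ)) := by
  refine tendstoInMeasure_of_eq_of_norm_lt_one
    (g := fun k n ω => ⨆ t : Icc (0:ℝ) T, ‖Y n (k + 1) t ω - Yi (k + 1) t ω‖)
    (tendsto_measure_exists_rat_lt_norm (Z := Xi)
      (fun t => hXimeas.comp (measurable_const.prodMk measurable_id))
      (hσiT.mono fun ω hω => hXicontT ω hω))
    (fun k => hb (k + 1) (by positivity)) fun k n => ?_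
  filter_upwards [hσT n, hσiT, ha n (k + 1) (by positivity), hai (k + 1) (by positivity)]
    with ω hσn hσi hYX hYXi hXi_le hsmall
  rw [hρ] at hYX
  rw [hρi] at hYXi
  rw [Real.norm_of_nonneg (Real.iSup_nonneg fun _ => norm_nonneg _)] at hsmall
  simp only [not_exists, not_and, not_lt] at hXi_le
  exact iSup_norm_sub_eq_of_eqOn_exitTime hT.le hσn.le hσi.le (hXcontT n ω hσn)
    (hYcont n _ ω) (hYicont _ ω) (norm_le_of_forall_rat hT (hXicontT ω hσi) hXi_le)
    hYX hYXi hsmall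

theorem stmt_7
    {Ω : Type*} [MeasurableSpace Ω] (P : Measure Ω) [IsProbabilityMeasure P]
    {E : Type*} [NormedAddCommGroup E] [NormedSpace ℝ E] [CompleteSpace E]
    [MeasurableSpace E] [BorelSpace E]
    (T : ℝ) (hT : 0 < T)
    -- the explosion times σ_n (n ∈ ℕ) and σ_∞
    (σ : ℕ → Ω → ℝ) (σi : Ω → ℝ)
    (hσmeas : ∀ n, Measurable (σ n)) (hσimeas : Measurable σi)
    (hσmem : ∀ n ω, σ n ω ∈ Set.Ioc 0 T) (hσimem : ∀ ω, σi ω ∈ Set.Ioc 0 T)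
    -- the processes X_n (n ∈ ℕ) and X_∞, jointly measurable
    (X : ℕ → ℝ → Ω → E) (Xi : ℝ → Ω → E)
    (hXmeas : ∀ n, Measurable fun p : ℝ × Ω => X n p.1 p.2)
    (hXimeas : Measurable fun p : ℝ × Ω => Xi p.1 p.2)
    -- path continuity on [0, σ_n(ω)), and on [0,T] if σ_n(ω) = T
    (hXcont : ∀ n ω, ContinuousOn (fun t => X n t ω) (Set.Ico 0 (σ n ω)))
    (hXcontT : ∀ n ω, σ n ω = T → ContinuousOn (fun t => X n t ω) (Set.Icc 0 T))
    (hXicont : ∀ ω, ContinuousOn (fun t => Xi t ω) (Set.Ico 0 (σi ω)))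
    (hXicontT : ∀ ω, σi ω = T → ContinuousOn (fun t => Xi t ω) (Set.Icc 0 T))
    -- σ_n is an explosion time: on {σ_n < T}, limsup_{t ↑ σ_n} ‖X_n(t)‖ = ∞
    (hexpl : ∀ n ω, σ n ω < T →
      ∀ M : ℝ, ∃ᶠ t in nhdsWithin (σ n ω) (Set.Iio (σ n ω)), M < ‖X n t ω‖)
    (hexpli : ∀ ω, σi ω < T →
      ∀ M : ℝ, ∃ᶠ t in nhdsWithin (σi ω) (Set.Iio (σi ω)), M < ‖Xi t ω‖)
    -- the stopping times ρ_n^{(r)} = inf { t ∈ (0, σ_n) : ‖X_n(t)‖ > r }, inf ∅ := T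
    (ρ : ℕ → ℝ → Ω → ℝ) (ρi : ℝ → Ω → ℝ)
    (hρ : ∀ n r ω, ρ n r ω = sInf ({t : ℝ | t ∈ Set.Ioo 0 (σ n ω) ∧ r < ‖X n t ω‖} ∪ {T}))
    (hρi : ∀ r ω, ρi r ω = sInf ({t : ℝ | t ∈ Set.Ioo 0 (σi ω) ∧ r < ‖Xi t ω‖} ∪ {T}))
    -- the globally defined processes X_n^{(r)} (denoted Y n r) and X_∞^{(r)} (denoted Yi r)
    (Y : ℕ → ℝ → ℝ → Ω → E) (Yi : ℝ → ℝ → Ω → E)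
    (hYmeas : ∀ n r, Measurable fun p : ℝ × Ω => Y n r p.1 p.2)
    (hYimeas : ∀ r, Measurable fun p : ℝ × Ω => Yi r p.1 p.2)
    (hYcont : ∀ n r ω, Continuous fun t => Y n r t ω)
    (hYicont : ∀ r ω, Continuous fun t => Yi r t ω)
    -- assumption (a)
    (ha : ∀ n r, 0 < r → ∀ᵐ ω ∂P, ∀ t ∈ Set.Icc 0 (ρ n r ω), Y n r t ω = X n t ω)
    (hai : ∀ r, 0 < r → ∀ᵐ ω ∂P, ∀ t ∈ Set.Icc 0 (ρi r ω), Yi r t ω = Xi t ω)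
    -- assumption (b): X_n^{(r)} → X_∞^{(r)} in L⁰(Ω; C([0,T]; E))
    (hb : ∀ r, 0 < r → TendstoInMeasure P
      (fun n ω => ⨆ t : Set.Icc (0:ℝ) T, ‖Y n r (t : ℝ) ω - Yi r (t : ℝ) ω‖)
      atTop (fun _ => (0 : ℝ)))
    -- additionally: σ_n = T almost surely for all n ∈ ℕ ∪ {{∞}}
    (hσT : ∀ n, ∀ᵐ ω ∂P, σ n ω = T) (hσiT : ∀ᵐ ω ∂P, σi ω = T) :
    TendstoInMeasure P
      (fun n ω => ⨆ t : Set.Icc (0:ℝ) T, ‖X n (t : ℝ) ω - Xi (t : ℝ) ω‖)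
      atTop (fun _ => (0 : ℝ)) :=
  stmt_7_general P T hT σ σi X Xi hXimeas hXcontT hXicontT ρ ρi hρ hρi Y Yi hYcont hYicont ha hai hb
    hσT hσiT
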